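/- Fix an integer s ≥ 2. There is a constant C (depending only on s) such that for every integer z ≥ 1, ∑_{ω ∈ Ω_z, |ω| ≤ s−1} w(ω) ≤ C z^{−1/s}. -/

import Mathlib

open Filter
open scoped Classical

/-- `σ(ω)`: the set of integers expressible as `∑_{x ∈ ω} a x * x` where the coefficients
`a x` are positive integers with `∑_{x ∈ ω} a x = s`. (Empty when `|ω| > s` or `ω = ∅`.) -/
def sigmaSet (s : ℕ) (ω : Finset ℕ) : Set ℕ :=
  {z | ∃ a : ℕ → ℕ, (∀ x ∈ ω, 1 ≤ a x) ∧ (∑ x ∈ ω, a x) = s ∧ (∑ x ∈ ω, a x * x) = z}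

/-- `w(ω) = ∏_{x ∈ ω} (1/s) x^{−1+1/s}`. -/
noncomputable def wgt (s : ℕ) (ω : Finset ℕ) : ℝ :=
  ∏ x ∈ ω, (1 / (s : ℝ)) * (x : ℝ) ^ (-1 + 1 / (s : ℝ))

/-!
If `M` is the largest element of `ω ∈ Ω_z`, then `z ≤ s M`, so the factor of `M` in `w(ω)` is at
most `z^{-1+1/s}`. Removing `M` leaves a set `τ ⊆ [1, z]` with `|τ| ≤ s - 2`, and `ω` is recovered
from `τ` and the coefficients on `τ` of a representation of `z`, so each `τ` arises at most
`(s + 1)^{s-2}` times. Finally `∑_{|τ| = j} w(τ) ≤ (∑_{x ≤ z} w({x}))^j ≤ z^{j/s}`, where the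
last step compares `x^{-1+1/s}/s` with the telescoping increments `x^{1/s} - (x-1)^{1/s}`;
since `z^{-1+1/s} z^{(s-2)/s} = z^{-1/s}` this gives the bound.
-/

open Finset

theorem Finset.sum_comp_le_mul_sum {α β R : Type*} [DecidableEq β]
    [CommSemiring R] [PartialOrder R] [IsOrderedRing R]
    {S : Finset α} {T : Finset β} {f : α → β} {g : β → R} {K : ℕ}
    (hg : ∀ b ∈ T, 0 ≤ g b) (hf : ∀ a ∈ S, f a ∈ T) (hK : ∀ b ∈ T, #{a ∈ S | f a = b} ≤ K) :
    ∑ a ∈ S, g (f a) ≤ K * ∑ b ∈ T, g b := by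
  have hST : S.image f ⊆ T := image_subset_iff.mpr hf
  rw [sum_comp, mul_sum]
  calc ∑ b ∈ S.image f, #{a ∈ S | f a = b} • g b
      ≤ ∑ b ∈ S.image f, (K : R) * g b := by
        refine sum_le_sum fun b hb => ?_
        rw [nsmul_eq_mul]
        exact mul_le_mul_of_nonneg_right (Nat.mono_cast (hK b (hST hb))) (hg b (hST hb))
    _ ≤ ∑ b ∈ T, (K : R) * g b :=
        sum_le_sum_of_subset_of_nonneg hST fun b hb _ => mul_nonneg (Nat.cast_nonneg K) (hg b hb)

theorem Finset.sum_powersetCard_prod_le_pow {α R : Type*} [DecidableEq α]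
    [CommSemiring R] [PartialOrder R] [IsOrderedRing R]
    (A : Finset α) {f : α → R} (hf : ∀ x ∈ A, 0 ≤ f x) (j : ℕ) :
    ∑ τ ∈ A.powersetCard j, ∏ x ∈ τ, f x ≤ (∑ x ∈ A, f x) ^ j := by
  induction A using Finset.induction_on generalizing j with
  | empty =>
    rcases j with _ | j
    · simp
    · simp [powersetCard_eq_empty.mpr (by simp : (∅ : Finset α).card < j + 1)]
  | insert a A ha ih =>
    have hfA : ∀ x ∈ A, 0 ≤ f x := fun x hx => hf x (mem_insert_of_mem hx)
    have hfa : 0 ≤ f a := hf a (mem_insert_self a A)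
    have hA : 0 ≤ ∑ x ∈ A, f x := sum_nonneg hfA
    cases j with
    | zero => simp
    | succ j =>
      have hdisj : Disjoint (A.powersetCard (j + 1)) ((A.powersetCard j).image (insert a)) := by
        refine disjoint_left.mpr fun τ hτ hτ' => ?_
        obtain ⟨σ, -, rfl⟩ := mem_image.mp hτ'
        exact ha ((mem_powersetCard.mp hτ).1 (mem_insert_self a σ))
      have hinj : Set.InjOn (insert a) (A.powersetCard j : Set (Finset α)) :=
        fun σ hσ σ' hσ' h => by
          have ha' : ∀ σ ∈ A.powersetCard j, a ∉ σ := fun σ hσ h' =>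
            ha ((mem_powersetCard.mp hσ).1 h')
          rw [← erase_insert (ha' σ hσ), ← erase_insert (ha' σ' hσ'), h]
      rw [powersetCard_succ_insert ha, sum_union hdisj, sum_image hinj, sum_insert ha]
      calc ∑ τ ∈ A.powersetCard (j + 1), ∏ x ∈ τ, f x
            + ∑ σ ∈ A.powersetCard j, ∏ x ∈ insert a σ, f x
          = ∑ τ ∈ A.powersetCard (j + 1), ∏ x ∈ τ, f x
            + f a * ∑ σ ∈ A.powersetCard j, ∏ x ∈ σ, f x := by
            rw [mul_sum]
            refine congrArg _ (sum_congr rfl fun σ hσ => prod_insert fun h' => ?_)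
            exact ha ((mem_powersetCard.mp hσ).1 h')
        _ ≤ (∑ x ∈ A, f x) ^ (j + 1) + f a * (∑ x ∈ A, f x) ^ j := by
            gcongr <;> exact ih hfA _
        _ ≤ (f a + ∑ x ∈ A, f x) ^ (j + 1) := by
            have hpow : (∑ x ∈ A, f x) ^ j ≤ (f a + ∑ x ∈ A, f x) ^ j :=
              pow_le_pow_left₀ hA (le_add_of_nonneg_left hfa) j
            calc (∑ x ∈ A, f x) ^ (j + 1) + f a * (∑ x ∈ A, f x) ^ j
                = (∑ x ∈ A, f x) ^ j * (f a + ∑ x ∈ A, f x) := by ring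
              _ ≤ (f a + ∑ x ∈ A, f x) ^ j * (f a + ∑ x ∈ A, f x) :=
                mul_le_mul_of_nonneg_right hpow (add_nonneg hfa hA)
              _ = (f a + ∑ x ∈ A, f x) ^ (j + 1) := by ring

theorem Real.mul_rpow_sub_one_le_rpow_sub_rpow {t x : ℝ} (ht₀ : 0 ≤ t) (ht₁ : t ≤ 1)
    (hx : 1 ≤ x) : t * x ^ (t - 1) ≤ x ^ t - (x - 1) ^ t := by
  have hx₀ : 0 < x := by linarith
  have hbern : (1 + -x⁻¹) ^ t ≤ 1 + t * -x⁻¹ :=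
    rpow_one_add_le_one_add_mul_self (by linarith [inv_le_one_of_one_le₀ hx]) ht₀ ht₁
  have hsplit : (x - 1) ^ t = x ^ t * (1 + -x⁻¹) ^ t := by
    rw [← Real.mul_rpow hx₀.le (by linarith [inv_le_one_of_one_le₀ hx])]
    congr 1
    field_simp
    ring
  have hscaled := mul_le_mul_of_nonneg_left hbern (Real.rpow_nonneg hx₀.le t)
  rw [hsplit, Real.rpow_sub_one hx₀.ne']
  linarith [show x ^ t * (1 + t * -x⁻¹) = x ^ t - t * (x ^ t / x) by ring]

theorem Real.sum_Icc_mul_rpow_sub_one_le {t : ℝ} (ht₀ : 0 ≤ t) (ht₁ : t ≤ 1) (n : ℕ) :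
    ∑ x ∈ Icc 1 n, t * (x : ℝ) ^ (t - 1) ≤ (n : ℝ) ^ t := by
  induction n with
  | zero => simpa using Real.rpow_nonneg le_rfl t
  | succ n ih =>
    rw [sum_Icc_succ_top (by omega)]
    have hstep := Real.mul_rpow_sub_one_le_rpow_sub_rpow ht₀ ht₁ (x := (n + 1 : ℕ))
      (by exact_mod_cast Nat.le_add_left 1 n)
    push_cast at hstep ⊢
    rw [add_sub_cancel_right] at hstep
    linarith

theorem Real.one_div_mul_rpow_le_rpow_of_le_mul {s z M : ℝ} (hs : 1 ≤ s) (hz : 0 < z)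
    (hzM : z ≤ s * M) :
    1 / s * M ^ (-1 + 1 / s) ≤ z ^ (-1 + 1 / s) := by
  have hs₀ : 0 < s := by linarith
  have he : -1 + 1 / s ≤ 0 := by linarith [(div_le_one hs₀).mpr hs]
  have hzs : z / s ≤ M := (div_le_iff₀' hs₀).mpr hzM
  have hs' : s ^ (1 / s) = s * s ^ (-1 + 1 / s) := by
    rw [Real.rpow_add hs₀, Real.rpow_neg_one]
    field_simp
  calc 1 / s * M ^ (-1 + 1 / s) ≤ 1 / s * (z / s) ^ (-1 + 1 / s) :=
        mul_le_mul_of_nonneg_left (Real.rpow_le_rpow_of_nonpos (by positivity) hzs he)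
          (by positivity)
    _ = z ^ (-1 + 1 / s) / s ^ (1 / s) := by
        rw [Real.div_rpow hz.le hs₀.le, hs']
        field_simp
    _ ≤ z ^ (-1 + 1 / s) :=
        div_le_self (Real.rpow_nonneg hz.le _) (Real.one_le_rpow hs (by positivity))

theorem wgt_nonneg (s : ℕ) (ω : Finset ℕ) : 0 ≤ wgt s ω :=
  prod_nonneg fun x _ => mul_nonneg (by positivity) (Real.rpow_nonneg (Nat.cast_nonneg x) _)

theorem nonempty_of_mem_sigmaSet {s z : ℕ} {ω : Finset ℕ} (hs : s ≠ 0) (h : z ∈ sigmaSet s ω) :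
    ω.Nonempty := by
  obtain ⟨a, -, hsum, -⟩ := h
  rw [nonempty_iff_ne_empty]
  rintro rfl
  exact hs (by simpa using hsum.symm)

theorem le_mul_sup_of_mem_sigmaSet {s z : ℕ} {ω : Finset ℕ} (h : z ∈ sigmaSet s ω) :
    z ≤ s * ω.sup id := by
  obtain ⟨a, -, hsum, rfl⟩ := h
  calc ∑ x ∈ ω, a x * x ≤ ∑ x ∈ ω, a x * ω.sup id :=
        sum_le_sum fun x hx => Nat.mul_le_mul_left _ (le_sup (f := id) hx)
    _ = s * ω.sup id := by rw [← sum_mul, hsum]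

theorem sup_mem_of_mem_sigmaSet {s z : ℕ} {ω : Finset ℕ} (hs : s ≠ 0) (h : z ∈ sigmaSet s ω) :
    ω.sup id ∈ ω := by
  obtain ⟨M, hM, hsup⟩ := exists_mem_eq_sup ω (nonempty_of_mem_sigmaSet hs h) id
  exact hsup ▸ hM

theorem wgt_le_rpow_mul_wgt_erase_sup {s z : ℕ} {ω : Finset ℕ} (hs : s ≠ 0) (hz : 0 < z)
    (h : z ∈ sigmaSet s ω) :
    wgt s ω ≤ (z : ℝ) ^ (-1 + 1 / (s : ℝ)) * wgt s (ω.erase (ω.sup id)) := by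
  rw [wgt, ← mul_prod_erase ω _ (sup_mem_of_mem_sigmaSet hs h)]
  refine mul_le_mul_of_nonneg_right ?_ (wgt_nonneg s _)
  exact Real.one_div_mul_rpow_le_rpow_of_le_mul (by exact_mod_cast Nat.one_le_iff_ne_zero.mpr hs)
    (by exact_mod_cast hz) (by exact_mod_cast le_mul_sup_of_mem_sigmaSet h)

theorem card_filter_erase_eq_le {s z : ℕ} {S : Finset (Finset ℕ)} {g : Finset ℕ → ℕ}
    (hS : ∀ ω ∈ S, g ω ∈ ω ∧ z ∈ sigmaSet s ω) (τ : Finset ℕ) :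
    #{ω ∈ S | ω.erase (g ω) = τ} ≤ (s + 1) ^ #τ := by
  -- `ω = insert M τ` is recovered from `τ` and the coefficients on `τ` of a representation of `z`
  let F : (τ → Fin (s + 1)) → Finset ℕ := fun b =>
    insert ((z - ∑ x : τ, (b x : ℕ) * x) / (s - ∑ x : τ, (b x : ℕ))) τ
  calc #{ω ∈ S | ω.erase (g ω) = τ} ≤ #(univ.image F) := card_le_card ?_
    _ ≤ #(univ : Finset (τ → Fin (s + 1))) := card_image_le
    _ = (s + 1) ^ #τ := by simp
  intro ω hω
  obtain ⟨hωS, hτ⟩ := mem_filter.mp hω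
  obtain ⟨hg, a, ha, hsum, hz⟩ := hS ω hωS
  have hlt : ∀ x ∈ ω, a x < s + 1 := fun x hx =>
    Nat.lt_succ_of_le (hsum ▸ single_le_sum (fun _ _ => Nat.zero_le _) hx)
  have hτω : ∀ x ∈ τ, x ∈ ω := fun x hx => by
    rw [← hτ] at hx
    exact mem_of_mem_erase hx
  refine mem_image.mpr ⟨fun x => ⟨a x, hlt x (hτω x x.2)⟩, mem_univ _, ?_⟩
  have hsum' := add_sum_erase ω a hg
  have hz' := add_sum_erase ω (fun x => a x * x) hg
  simp only [F, sum_coe_sort τ (fun x => a x * x), sum_coe_sort τ a, ← hτ]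
  rw [← hsum, ← hz, ← hsum', ← hz', Nat.add_sub_cancel, Nat.add_sub_cancel,
    Nat.mul_div_cancel_left _ (ha _ hg), insert_erase hg]

theorem sum_wgt_filter_card_le {s : ℕ} (hs : s ≠ 0) {z : ℕ} (hz : 1 ≤ z) (m : ℕ) :
    ∑ τ ∈ (Icc 1 z).powerset.filter (fun τ => #τ ≤ m), wgt s τ ≤
      (m + 1) * ((z : ℝ) ^ (1 / (s : ℝ))) ^ m := by
  set W := (z : ℝ) ^ (1 / (s : ℝ))
  have hW : 1 ≤ W := Real.one_le_rpow (by exact_mod_cast hz) (by positivity)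
  have hterm_nonneg : ∀ x ∈ Icc 1 z, 0 ≤ 1 / (s : ℝ) * (x : ℝ) ^ (-1 + 1 / (s : ℝ)) :=
    fun x _ => mul_nonneg (by positivity) (Real.rpow_nonneg (Nat.cast_nonneg x) _)
  have hsingle : ∑ x ∈ Icc 1 z, 1 / (s : ℝ) * (x : ℝ) ^ (-1 + 1 / (s : ℝ)) ≤ W := by
    simpa only [neg_add_eq_sub] using Real.sum_Icc_mul_rpow_sub_one_le (t := 1 / (s : ℝ))
      (by positivity) (div_le_one_of_le₀ (by exact_mod_cast Nat.one_le_iff_ne_zero.mpr hs)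
        (Nat.cast_nonneg s)) z
  rw [← sum_fiberwise_of_maps_to (g := card) (t := range (m + 1))
    (fun τ hτ => mem_range.mpr (Nat.lt_succ_of_le (mem_filter.mp hτ).2))]
  calc ∑ j ∈ range (m + 1), ∑ τ ∈ (Icc 1 z).powerset.filter (fun τ => #τ ≤ m) with #τ = j,
        wgt s τ
      ≤ ∑ j ∈ range (m + 1), ∑ τ ∈ (Icc 1 z).powersetCard j, wgt s τ := by
        refine sum_le_sum fun j _ => sum_le_sum_of_subset_of_nonneg ?_ fun τ _ _ =>
          wgt_nonneg s τ
        intro τ hτ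
        simp only [mem_filter, mem_powerset] at hτ
        exact mem_powersetCard.mpr ⟨hτ.1.1, hτ.2⟩
    _ ≤ ∑ j ∈ range (m + 1), W ^ j :=
        sum_le_sum fun j _ => (sum_powersetCard_prod_le_pow _ hterm_nonneg j).trans
          (pow_le_pow_left₀ (sum_nonneg hterm_nonneg) hsingle j)
    _ ≤ ∑ j ∈ range (m + 1), W ^ m :=
        sum_le_sum fun j hj => pow_le_pow_right₀ hW (Nat.lt_succ_iff.mp (mem_range.mp hj))
    _ = (m + 1) * W ^ m := by simp

theorem sum_wgt_le_rpow_mul_sum_wgt {s z : ℕ} (hs : 2 ≤ s) (hz : 1 ≤ z) :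
    ∑ ω ∈ (Icc 1 z).powerset.filter (fun ω => z ∈ sigmaSet s ω ∧ ω.card ≤ s - 1), wgt s ω ≤
      (z : ℝ) ^ (-1 + 1 / (s : ℝ)) * (((s : ℝ) + 1) ^ (s - 2) *
        ∑ τ ∈ (Icc 1 z).powerset.filter (fun τ => #τ ≤ s - 2), wgt s τ) := by
  set S := (Icc 1 z).powerset.filter (fun ω => z ∈ sigmaSet s ω ∧ ω.card ≤ s - 1)
  have hs₀ : s ≠ 0 := by omega
  have hS : ∀ ω ∈ S, ω.sup id ∈ ω ∧ z ∈ sigmaSet s ω := fun ω hω =>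
    have h := (mem_filter.mp hω).2.1
    ⟨sup_mem_of_mem_sigmaSet hs₀ h, h⟩
  have hmaps : ∀ ω ∈ S, ω.erase (ω.sup id) ∈
      (Icc 1 z).powerset.filter (fun τ => #τ ≤ s - 2) := by
    intro ω hω
    obtain ⟨hsub, -, hcard⟩ := mem_filter.mp hω
    refine mem_filter.mpr ⟨mem_powerset.mpr ((erase_subset _ _).trans (mem_powerset.mp hsub)), ?_⟩
    rw [card_erase_of_mem (hS ω hω).1]
    omega
  calc ∑ ω ∈ S, wgt s ω
      ≤ ∑ ω ∈ S, (z : ℝ) ^ (-1 + 1 / (s : ℝ)) * wgt s (ω.erase (ω.sup id)) :=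
        sum_le_sum fun ω hω => wgt_le_rpow_mul_wgt_erase_sup hs₀ hz (hS ω hω).2
    _ = (z : ℝ) ^ (-1 + 1 / (s : ℝ)) * ∑ ω ∈ S, wgt s (ω.erase (ω.sup id)) := (mul_sum ..).symm
    _ ≤ _ := by
        gcongr
        exact_mod_cast sum_comp_le_mul_sum (fun τ _ => wgt_nonneg s τ) hmaps fun τ hτ =>
          (card_filter_erase_eq_le hS τ).trans
            (Nat.pow_le_pow_right (Nat.succ_pos s) (mem_filter.mp hτ).2)

/-- There is a constant `C` (depending only on `s`) such that for every `z ≥ 1`,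
`∑_{ω ∈ Ω_z, |ω| ≤ s−1} w(ω) ≤ C z^{−1/s}` (all such `ω` are subsets of `[1, z]`). -/
theorem sum_wgt_small_support (s : ℕ) (hs : 2 ≤ s) :
    ∃ C : ℝ, 0 < C ∧ ∀ z : ℕ, 1 ≤ z →
      ∑ ω ∈ (Finset.Icc 1 z).powerset.filter
            (fun ω => z ∈ sigmaSet s ω ∧ ω.card ≤ s - 1), wgt s ω
        ≤ C * (z : ℝ) ^ (-(1 : ℝ) / (s : ℝ)) := by
  refine ⟨((s : ℝ) + 1) ^ (s - 2) * ((s - 2 : ℕ) + 1), by positivity, fun z hz => ?_⟩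
  have hz₀ : (0 : ℝ) < z := by exact_mod_cast hz
  have hexp : (z : ℝ) ^ (-1 + 1 / (s : ℝ)) * ((z : ℝ) ^ (1 / (s : ℝ))) ^ (s - 2) =
      (z : ℝ) ^ (-(1 : ℝ) / (s : ℝ)) := by
    rw [← Real.rpow_natCast, ← Real.rpow_mul hz₀.le, ← Real.rpow_add hz₀, Nat.cast_sub hs]
    congr 1
    field_simp
    ring
  calc _ ≤ (z : ℝ) ^ (-1 + 1 / (s : ℝ)) * (((s : ℝ) + 1) ^ (s - 2) *
          ∑ τ ∈ (Icc 1 z).powerset.filter (fun τ => #τ ≤ s - 2), wgt s τ) :=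
        sum_wgt_le_rpow_mul_sum_wgt hs hz
    _ ≤ (z : ℝ) ^ (-1 + 1 / (s : ℝ)) * (((s : ℝ) + 1) ^ (s - 2) *
          (((s - 2 : ℕ) + 1) * ((z : ℝ) ^ (1 / (s : ℝ))) ^ (s - 2))) := by
        gcongr
        exact sum_wgt_filter_card_le (by omega) hz (s - 2)
    _ = _ := by
        rw [← hexp]
        ring
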